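/- arXiv:2008.10853 — 2 statements merged into one kernel-verified Lean document; each statement's English description precedes it below -/
import Mathlib

section
/- With f as above, if f'(0) > 0, then by continuity there exists Θ* ∈ (0,1) with f(Θ*) = 0; that is, the self-consistency equation Θ = (1/⟨k⟩)∑_{k'} k'P(k')(1−(1−p)^{k'Θ})/((1−(1−p)^{k'Θ})+γ₁) admits a strictly positive solution in (0,1). -/
/-- If the DFE-A self-consistency function `f` has positive derivative at `0`, then (since
`f 0 = 0` and `f 1 < 0`) there exists a strictly positive solution `Θ* ∈ (0,1)` of
`f Θ* = 0`, i.e. of the self-consistency equation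
`Θ = (1/⟨k⟩) ∑ k' P(k') (1-(1-p)^{k'Θ})/((1-(1-p)^{k'Θ}) + γ₁)`. -/
theorem dfea_positive_fixed_point (n : ℕ) (hn : 0 < n)
    (k : Fin n → ℝ) (hk : ∀ i, 0 < k i)
    (P : Fin n → ℝ) (hP : ∀ i, 0 < P i) (hPsum : ∑ i, P i = 1)
    (p γ₁ : ℝ) (hp : 0 < p) (hp1 : p < 1) (hγ₁ : 0 < γ₁)
    (f : ℝ → ℝ)
    (hf : ∀ Θ : ℝ, f Θ =
      (∑ i, k i * P i * ((1 - (1 - p) ^ (k i * Θ)) / (1 - (1 - p) ^ (k i * Θ) + γ₁))) /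
        (∑ i, k i * P i) - Θ)
    (hderiv : 0 < deriv f 0) :
    ∃ Θ ∈ Set.Ioo (0 : ℝ) 1, f Θ = 0 := by
  have hq : (0:ℝ) < 1 - p := by linarith
  haveI : Nonempty (Fin n) := Fin.pos_iff_nonempty.mp hn
  have hne : (Finset.univ : Finset (Fin n)).Nonempty := Finset.univ_nonempty
  have hS : 0 < ∑ i, k i * P i :=
    Finset.sum_pos (fun i _ => mul_pos (hk i) (hP i)) hne
  -- f 0 = 0
  have hf0 : f 0 = 0 := by
    rw [hf]; simp [Real.rpow_zero]
  -- from positive derivative, find a point x ∈ (0,1) with f x > 0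
  have hdiff : DifferentiableAt ℝ f 0 :=
    differentiableAt_of_deriv_ne_zero (ne_of_gt hderiv)
  have hHas : HasDerivAt f (deriv f 0) 0 := hdiff.hasDerivAt
  rw [hasDerivAt_iff_tendsto_slope] at hHas
  have hev : ∀ᶠ x in nhdsWithin (0:ℝ) {(0:ℝ)}ᶜ, 0 < slope f 0 x :=
    hHas.eventually (eventually_gt_nhds hderiv)
  have hev' : ∀ᶠ x in nhdsWithin (0:ℝ) (Set.Ioi 0), 0 < slope f 0 x :=
    hev.filter_mono (nhdsWithin_mono 0 fun x hx => ne_of_gt hx)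
  have hmem : Set.Ioo (0:ℝ) 1 ∈ nhdsWithin (0:ℝ) (Set.Ioi 0) :=
    Ioo_mem_nhdsGT_of_mem (by constructor <;> norm_num)
  obtain ⟨x, hxslope, hx01⟩ := (hev'.and (Filter.eventually_mem_set.mpr hmem)).exists
  have hx0 : 0 < x := hx01.1
  have hx1 : x < 1 := hx01.2
  have hfx : 0 < f x := by
    have := hxslope
    rw [slope_def_field] at this
    have h2 : (f x - f 0) / (x - 0) > 0 := this
    rw [hf0, sub_zero, sub_zero] at h2
    exact (div_pos_iff.mp h2).resolve_right (fun h => absurd hx0 (not_lt.mpr h.2.le)) |>.1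
  -- f 1 < 0
  have hf1 : f 1 < 0 := by
    rw [hf]
    have hlt : (∑ i, k i * P i * ((1 - (1 - p) ^ (k i * 1)) / (1 - (1 - p) ^ (k i * 1) + γ₁)))
        < ∑ i, k i * P i := by
      apply Finset.sum_lt_sum_of_nonempty hne
      intro i _
      have hnum : 0 ≤ 1 - (1 - p) ^ (k i * 1) := by
        have : (1 - p) ^ (k i * 1) ≤ 1 :=
          Real.rpow_le_one (le_of_lt hq) (by linarith) (mul_nonneg (hk i).le (by norm_num))
        linarith
      have hfrac : (1 - (1 - p) ^ (k i * 1)) / (1 - (1 - p) ^ (k i * 1) + γ₁) < 1 := by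
        rw [div_lt_one (by linarith)]
        linarith
      calc k i * P i * ((1 - (1 - p) ^ (k i * 1)) / (1 - (1 - p) ^ (k i * 1) + γ₁))
          < k i * P i * 1 := by
            apply mul_lt_mul_of_pos_left hfrac (mul_pos (hk i) (hP i))
        _ = k i * P i := by ring
    have := (div_lt_one hS).mpr hlt
    linarith
  -- continuity of f on [x, 1]
  have hcont : ContinuousOn f (Set.Icc x 1) := by
    have heq : f = fun Θ =>
        (∑ i, k i * P i * ((1 - (1 - p) ^ (k i * Θ)) / (1 - (1 - p) ^ (k i * Θ) + γ₁))) /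
          (∑ i, k i * P i) - Θ := funext hf
    rw [heq]
    apply ContinuousOn.sub _ continuousOn_id
    apply ContinuousOn.div_const
    apply continuousOn_finset_sum
    intro i _
    apply ContinuousOn.mul continuousOn_const
    have hrc : Continuous fun Θ : ℝ => (1 - p) ^ (k i * Θ) := by
      simp only [Real.rpow_def_of_pos hq]
      exact Real.continuous_exp.comp (continuous_const.mul (continuous_const.mul continuous_id))
    apply ContinuousOn.div
    · exact (continuous_const.sub hrc).continuousOn
    · exact ((continuous_const.sub hrc).add continuous_const).continuousOn
    · intro Θ hΘ
      have hΘ0 : 0 ≤ Θ := le_trans hx0.le hΘ.1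
      have : (1 - p) ^ (k i * Θ) ≤ 1 :=
        Real.rpow_le_one (le_of_lt hq) (by linarith) (mul_nonneg (hk i).le hΘ0)
      intro hcon
      nlinarith
  -- IVT
  have hsub : Set.Ioo (f 1) (f x) ⊆ f '' Set.Ioo x 1 :=
    intermediate_value_Ioo' hx1.le hcont
  obtain ⟨Θ, hΘmem, hΘ0⟩ := hsub ⟨hf1, hfx⟩
  exact ⟨Θ, ⟨lt_trans hx0 hΘmem.1, hΘmem.2⟩, hΘ0⟩
end

section
/- Define g(Θ) = (1/⟨k⟩)∑_{k'} k'P(k')·α_{k'} k' Θ/(γ₂ + α_{k'} k' Θ) for Θ ∈ [0,1], with α_{k'} > 0, γ₂ > 0. Then g(0) = 0, g is strictly increasing and strictly concave on (0,1), and g(1) < 1; hence if g'(0) = ⟨α_k k²⟩/(γ₂⟨k⟩) > 1 there exists a unique Θ* ∈ (0,1) with g(Θ*) = Θ*. -/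
/-!
With weights `wᵢ = kᵢPᵢ/⟨k⟩` (summing to `1`) and rates `aᵢ = αᵢkᵢ`, the map is the mixture
`g Θ = ∑ wᵢ aᵢΘ/(γ₂ + aᵢΘ)` of saturating responses, each strictly increasing, strictly concave
and below `1` on `[0, ∞)`. For the fixed point write `g Θ = Θ · h Θ` with
`h Θ = ∑ wᵢ aᵢ/(γ₂ + aᵢΘ)`: `h` is continuous and strictly decreasing, `h 0 = g'(0) > 1` and
`h 1 = g 1 < 1`, and the fixed points in `(0, 1)` are exactly the solutions of `h Θ = 1`. So there
is one by the intermediate value theorem, and only one by monotonicity of `h`.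
-/

open Set

section WeightedSum

variable {ι : Type*} {s : Finset ι} {w : ι → ℝ}

lemma strictMonoOn_weightedSum {β : Type*} [Preorder β] {f : ι → β → ℝ} {D : Set β}
    (hs : s.Nonempty) (hw : ∀ i ∈ s, 0 < w i) (hf : ∀ i ∈ s, StrictMonoOn (f i) D) :
    StrictMonoOn (fun x => ∑ i ∈ s, w i * f i x) D := fun _ hx _ hy hxy =>
  Finset.sum_lt_sum_of_nonempty hs fun i hi => mul_lt_mul_of_pos_left (hf i hi hx hy hxy) (hw i hi)

lemma strictAntiOn_weightedSum {β : Type*} [Preorder β] {f : ι → β → ℝ} {D : Set β}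
    (hs : s.Nonempty) (hw : ∀ i ∈ s, 0 < w i) (hf : ∀ i ∈ s, StrictAntiOn (f i) D) :
    StrictAntiOn (fun x => ∑ i ∈ s, w i * f i x) D := fun _ hx _ hy hxy =>
  Finset.sum_lt_sum_of_nonempty hs fun i hi => mul_lt_mul_of_pos_left (hf i hi hx hy hxy) (hw i hi)

lemma strictConcaveOn_weightedSum {E : Type*} [AddCommGroup E] [Module ℝ E] {f : ι → E → ℝ}
    {D : Set E} (hs : s.Nonempty) (hw : ∀ i ∈ s, 0 < w i)
    (hf : ∀ i ∈ s, StrictConcaveOn ℝ D (f i)) :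
    StrictConcaveOn ℝ D (fun x => ∑ i ∈ s, w i * f i x) := by
  refine ⟨(hf _ hs.choose_spec).1, fun x hx y hy hxy t u ht hu htu => ?_⟩
  simp only [smul_eq_mul, Finset.mul_sum, ← Finset.sum_add_distrib]
  refine Finset.sum_lt_sum_of_nonempty hs fun i hi => ?_
  have hfi := (hf i hi).2 hx hy hxy ht hu htu
  rw [smul_eq_mul, smul_eq_mul] at hfi
  calc t * (w i * f i x) + u * (w i * f i y) = w i * (t * f i x + u * f i y) := by ring
    _ < w i * f i (t • x + u • y) := mul_lt_mul_of_pos_left hfi (hw i hi)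

end WeightedSum

section Saturating

variable {a γ : ℝ}

lemma strictMonoOn_saturating (ha : 0 < a) (hγ : 0 < γ) :
    StrictMonoOn (fun θ => a * θ / (γ + a * θ)) (Ici 0) := by
  intro x (hx : 0 ≤ x) y (hy : 0 ≤ y) hxy
  rw [div_lt_div_iff₀ (by positivity) (by positivity)]
  nlinarith [mul_lt_mul_of_pos_left hxy (mul_pos ha hγ)]

lemma strictAntiOn_div_saturating (ha : 0 < a) (hγ : 0 < γ) :
    StrictAntiOn (fun θ => a / (γ + a * θ)) (Ici 0) := by
  intro x (hx : 0 ≤ x) y (hy : 0 ≤ y) hxy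
  have hax := mul_lt_mul_of_pos_left hxy ha
  exact div_lt_div_of_pos_left ha (by positivity) (by linarith)

lemma continuousOn_div_saturating (ha : 0 < a) (hγ : 0 < γ) :
    ContinuousOn (fun θ => a / (γ + a * θ)) (Ici 0) :=
  continuousOn_const.div (by fun_prop) fun θ (hθ : 0 ≤ θ) => by positivity

lemma strictConcaveOn_saturating (ha : 0 < a) (hγ : 0 < γ) :
    StrictConcaveOn ℝ (Ici 0) (fun θ => a * θ / (γ + a * θ)) := by
  refine ⟨convex_Ici 0, fun x (hx : 0 ≤ x) y (hy : 0 ≤ y) hxy t u ht hu htu => ?_⟩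
  obtain rfl : u = 1 - t := by linarith
  simp only [smul_eq_mul]
  have hz : 0 ≤ t * x + (1 - t) * y := by positivity
  have gap : a * (t * x + (1 - t) * y) / (γ + a * (t * x + (1 - t) * y))
      - (t * (a * x / (γ + a * x)) + (1 - t) * (a * y / (γ + a * y)))
      = t * (1 - t) * γ * a ^ 2 * (x - y) ^ 2
        / ((γ + a * x) * (γ + a * y) * (γ + a * (t * x + (1 - t) * y))) := by
    field_simp
    ring
  have hxy' := sub_ne_zero.2 hxy
  have gap_pos : 0 < t * (1 - t) * γ * a ^ 2 * (x - y) ^ 2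
      / ((γ + a * x) * (γ + a * y) * (γ + a * (t * x + (1 - t) * y))) := by positivity
  linarith

lemma saturating_lt_one (hγ : 0 < γ) {θ : ℝ} (h : 0 ≤ a * θ) : a * θ / (γ + a * θ) < 1 :=
  (div_lt_one (by positivity)).2 (by linarith)

end Saturating

theorem existsUnique_mem_Ioo_eq_self_of_eq_mul {F h : ℝ → ℝ} (hF : ∀ θ, F θ = θ * h θ)
    (hc : ContinuousOn h (Icc 0 1)) (hanti : StrictAntiOn h (Icc 0 1)) (h0 : 1 < h 0)
    (h1 : h 1 < 1) : ∃! Θ, Θ ∈ Ioo 0 1 ∧ F Θ = Θ := by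
  have fixed_iff : ∀ θ ∈ Ioo (0 : ℝ) 1, F θ = θ ↔ h θ = 1 := fun θ hθ => by
    rw [hF, mul_eq_left₀ hθ.1.ne']
  obtain ⟨Θ, hΘ, hhΘ⟩ := intermediate_value_Icc' zero_le_one hc ⟨h1.le, h0.le⟩
  have hΘ' : Θ ∈ Ioo 0 1 :=
    ⟨hΘ.1.lt_of_ne (by rintro rfl; linarith), hΘ.2.lt_of_ne (by rintro rfl; linarith)⟩
  refine ⟨Θ, ⟨hΘ', (fixed_iff Θ hΘ').2 hhΘ⟩, fun θ ⟨hθ, hFθ⟩ => ?_⟩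
  exact hanti.injOn (Ioo_subset_Icc_self hθ) hΘ ((fixed_iff θ hθ).1 hFθ ▸ hhΘ.symm)

section SaturatingSum

variable {ι : Type*} {s : Finset ι} {w a : ι → ℝ} {γ : ℝ}

noncomputable def saturatingSum (s : Finset ι) (w a : ι → ℝ) (γ θ : ℝ) : ℝ :=
  ∑ i ∈ s, w i * (a i * θ / (γ + a i * θ))

lemma saturatingSum_zero : saturatingSum s w a γ 0 = 0 := by
  simp [saturatingSum]

lemma saturatingSum_eq_mul (θ : ℝ) :
    saturatingSum s w a γ θ = θ * ∑ i ∈ s, w i * (a i / (γ + a i * θ)) := by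
  rw [saturatingSum, Finset.mul_sum]
  exact Finset.sum_congr rfl fun i _ => by ring

lemma strictMonoOn_saturatingSum (hs : s.Nonempty) (hw : ∀ i ∈ s, 0 < w i)
    (ha : ∀ i ∈ s, 0 < a i) (hγ : 0 < γ) : StrictMonoOn (saturatingSum s w a γ) (Ici 0) :=
  strictMonoOn_weightedSum hs hw fun i hi => strictMonoOn_saturating (ha i hi) hγ

lemma strictConcaveOn_saturatingSum (hs : s.Nonempty) (hw : ∀ i ∈ s, 0 < w i)
    (ha : ∀ i ∈ s, 0 < a i) (hγ : 0 < γ) :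
    StrictConcaveOn ℝ (Ici 0) (saturatingSum s w a γ) :=
  strictConcaveOn_weightedSum hs hw fun i hi => strictConcaveOn_saturating (ha i hi) hγ

lemma saturatingSum_lt_one (hs : s.Nonempty) (hw : ∀ i ∈ s, 0 < w i) (hw1 : ∑ i ∈ s, w i = 1)
    (ha : ∀ i ∈ s, 0 < a i) (hγ : 0 < γ) {θ : ℝ} (hθ : 0 ≤ θ) :
    saturatingSum s w a γ θ < 1 := by
  rw [saturatingSum, ← hw1]
  refine Finset.sum_lt_sum_of_nonempty hs fun i hi => ?_
  exact mul_lt_of_lt_one_right (hw i hi) (saturating_lt_one hγ (mul_nonneg (ha i hi).le hθ))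

theorem existsUnique_saturatingSum_eq_self (hs : s.Nonempty) (hw : ∀ i ∈ s, 0 < w i)
    (hw1 : ∑ i ∈ s, w i = 1) (ha : ∀ i ∈ s, 0 < a i) (hγ : 0 < γ)
    (hR : 1 < (∑ i ∈ s, w i * a i) / γ) :
    ∃! Θ, Θ ∈ Ioo 0 1 ∧ saturatingSum s w a γ Θ = Θ := by
  refine existsUnique_mem_Ioo_eq_self_of_eq_mul saturatingSum_eq_mul ?_ ?_ ?_ ?_
  · exact (continuousOn_finsetSum s fun i hi =>
      continuousOn_const.mul (continuousOn_div_saturating (ha i hi) hγ)).mono Icc_subset_Ici_self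
  · exact (strictAntiOn_weightedSum hs hw fun i hi =>
      strictAntiOn_div_saturating (ha i hi) hγ).mono Icc_subset_Ici_self
  · simpa [Finset.sum_div, mul_div_assoc] using hR
  · simpa [saturatingSum_eq_mul] using saturatingSum_lt_one hs hw hw1 ha hγ zero_le_one

end SaturatingSum

theorem endemic_fixed_point_general (n : ℕ) (hn : 0 < n)
    (k : Fin n → ℝ) (hk : ∀ i, 0 < k i)
    (P : Fin n → ℝ) (hP : ∀ i, 0 < P i)
    (α : Fin n → ℝ) (hα : ∀ i, 0 < α i) (γ₂ : ℝ) (hγ₂ : 0 < γ₂)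
    (g : ℝ → ℝ)
    (hg : ∀ Θ : ℝ, g Θ =
      (∑ i, k i * P i * (α i * k i * Θ / (γ₂ + α i * k i * Θ))) / (∑ i, k i * P i)) :
    g 0 = 0 ∧
      StrictMonoOn g (Set.Ioo (0 : ℝ) 1) ∧
      StrictConcaveOn ℝ (Set.Ioo (0 : ℝ) 1) g ∧
      g 1 < 1 ∧
      ((∑ i, α i * (k i) ^ 2 * P i) / (γ₂ * ∑ i, k i * P i) > 1 →
        ∃! Θ : ℝ, Θ ∈ Set.Ioo (0 : ℝ) 1 ∧ g Θ = Θ) := by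
  have hs : (Finset.univ : Finset (Fin n)).Nonempty := ⟨⟨0, hn⟩, Finset.mem_univ _⟩
  set K := ∑ i, k i * P i
  have hK : 0 < K := Finset.sum_pos (fun i _ => mul_pos (hk i) (hP i)) hs
  set w : Fin n → ℝ := fun i => k i * P i / K
  have hw : ∀ i ∈ Finset.univ, 0 < w i := fun i _ => div_pos (mul_pos (hk i) (hP i)) hK
  have hw1 : ∑ i, w i = 1 := by rw [← Finset.sum_div, div_self hK.ne']
  have ha : ∀ i ∈ Finset.univ, 0 < α i * k i := fun i _ => mul_pos (hα i) (hk i)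
  have hgF : g = saturatingSum Finset.univ w (fun i => α i * k i) γ₂ := by
    funext Θ
    rw [hg, saturatingSum, Finset.sum_div]
    exact Finset.sum_congr rfl fun i _ => by ring
  have hR : (∑ i, α i * k i ^ 2 * P i) / (γ₂ * K) = (∑ i, w i * (α i * k i)) / γ₂ := by
    rw [mul_comm, ← div_div, Finset.sum_div]
    exact congrArg (· / γ₂) (Finset.sum_congr rfl fun i _ => by ring)
  have hsub : Ioo (0 : ℝ) 1 ⊆ Ici 0 := Ioo_subset_Icc_self.trans Icc_subset_Ici_self
  subst hgF
  refine ⟨saturatingSum_zero, ?_, ?_, saturatingSum_lt_one hs hw hw1 ha hγ₂ zero_le_one,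
    fun h => existsUnique_saturatingSum_eq_self hs hw hw1 ha hγ₂ (hR ▸ h)⟩
  · exact (strictMonoOn_saturatingSum hs hw ha hγ₂).mono hsub
  · exact (strictConcaveOn_saturatingSum hs hw ha hγ₂).subset hsub (convex_Ioo 0 1)

/-- The endemic self-consistency map
`g(Θ) = (1/⟨k⟩) ∑ k' P(k') α_{k'} k' Θ/(γ₂ + α_{k'} k' Θ)` satisfies `g 0 = 0`, is strictly
increasing and strictly concave on `(0,1)`, and `g 1 < 1`; hence if
`g'(0) = ⟨α k²⟩/(γ₂ ⟨k⟩) > 1` there is a unique fixed point `Θ* ∈ (0,1)` with `g Θ* = Θ*`. -/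
theorem endemic_fixed_point (n : ℕ) (hn : 0 < n)
    (k : Fin n → ℝ) (hk : ∀ i, 0 < k i)
    (P : Fin n → ℝ) (hP : ∀ i, 0 < P i) (hPsum : ∑ i, P i = 1)
    (α : Fin n → ℝ) (hα : ∀ i, 0 < α i) (γ₂ : ℝ) (hγ₂ : 0 < γ₂)
    (g : ℝ → ℝ)
    (hg : ∀ Θ : ℝ, g Θ =
      (∑ i, k i * P i * (α i * k i * Θ / (γ₂ + α i * k i * Θ))) / (∑ i, k i * P i)) :
    g 0 = 0 ∧
      StrictMonoOn g (Set.Ioo (0 : ℝ) 1) ∧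
      StrictConcaveOn ℝ (Set.Ioo (0 : ℝ) 1) g ∧
      g 1 < 1 ∧
      ((∑ i, α i * (k i) ^ 2 * P i) / (γ₂ * ∑ i, k i * P i) > 1 →
        ∃! Θ : ℝ, Θ ∈ Set.Ioo (0 : ℝ) 1 ∧ g Θ = Θ) :=
  endemic_fixed_point_general n hn k hk P hP α hα γ₂ hγ₂ g hg
end
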